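/- The map sending h ∈ H(G,H) to the endomorphism e_h : φ ↦ φ ⋆ h of C_c(G/H) is a bijection from H(G,H) onto the set of ℤ-linear endomorphisms of C_c(G/H) that commute with the left translation action of G, and it satisfies e_{h₁ ⋆ h₂} = e_{h₂} ∘ e_{h₁}; in other words, H(G,H) is isomorphic as a ring to the opposite ring of the ring of ℤ[G]-equivariant endomorphisms of C_c(G/H). -/

import Mathlib

open scoped Pointwise

/-! ## Setting

`G` is a group and `H` a subgroup such that every double coset `HgH` is a finite union of
left cosets of `H`.  `H(G,H)` is the ring of bi-`H`-invariant `ℤ`-valued functions on `G`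
supported on finitely many double cosets, with convolution
`(f ⋆ f')(x) = Σ_{yH ∈ G/H} f(y)·f'(y⁻¹x)`; `C_c(G/H)` is the `ℤ`-module of right
`H`-invariant functions `G → ℤ` supported on finitely many left cosets, with `G` acting by
left translations `(g·φ)(x) = φ(g⁻¹x)` and with the right `H(G,H)`-action `φ ⋆ h` given by
the same convolution formula. -/

/-- The convolution `(f ⋆ f')(x) = Σ_{yH ∈ G/H} f(y)·f'(y⁻¹x)` (values at a left coset being
computed at a chosen representative). -/
noncomputable def hconv {G : Type} [Group G] (H : Subgroup G) (f f' : G → ℤ) : G → ℤ :=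
  fun x => ∑ᶠ y : G ⧸ H, f (Quotient.out y) * f' ((Quotient.out y)⁻¹ * x)

/-- `f : G → ℤ` is an element of the Hecke ring `H(G,H)`: left and right `H`-invariant and
vanishing outside finitely many double cosets of `H`. -/
def IsHeckeElt {G : Type} [Group G] (H : Subgroup G) (f : G → ℤ) : Prop :=
  (∀ h ∈ H, ∀ g : G, f (h * g) = f g) ∧ (∀ h ∈ H, ∀ g : G, f (g * h) = f g) ∧
    ∃ C : Finset G, ∀ g : G, f g ≠ 0 → ∃ c ∈ C, g ∈ (H : Set G) * {c} * (H : Set G)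

/-- `φ : G → ℤ` is an element of `C_c(G/H)`: right `H`-invariant and vanishing outside
finitely many left cosets of `H`. -/
def IsCc {G : Type} [Group G] (H : Subgroup G) (φ : G → ℤ) : Prop :=
  (∀ h ∈ H, ∀ g : G, φ (g * h) = φ g) ∧ {y : G ⧸ H | φ (Quotient.out y) ≠ 0}.Finite

/-! Every `φ ∈ C_c(G/H)` is a finite `ℤ`-combination of translates of the indicator `1_H` of the
coset `H`, so an additive `G`-equivariant endomorphism `E` of `C_c(G/H)` is determined by
`E 1_H`. Since `1_H ⋆ f = f`, the candidate preimage of `E` is `f = E 1_H`, which is left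
`H`-invariant because `1_H` is, hence lies in `H(G,H)`; evaluating at `1_H` also gives
injectivity. Finally `φ ↦ φ ⋆ (f₁ ⋆ f₂)` and `φ ↦ (φ ⋆ f₁) ⋆ f₂` are equivariant endomorphisms
that both send `1_H` to `f₁ ⋆ f₂`. -/

section
variable {G : Type} [Group G] {H : Subgroup G}

open Classical in
noncomputable def cosetIndicator (H : Subgroup G) (y : G ⧸ H) : G → ℤ :=
  fun x => if (x : G ⧸ H) = y then 1 else 0

lemma apply_out_mk {φ : G → ℤ} (hφ : ∀ h ∈ H, ∀ g : G, φ (g * h) = φ g) (x : G) :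
    φ (Quotient.out (x : G ⧸ H)) = φ x := by
  obtain ⟨h, hx⟩ := QuotientGroup.mk_out_eq_mul H x
  rw [hx, hφ h h.2]

lemma isCc_zero : IsCc H (0 : G → ℤ) :=
  ⟨fun _ _ _ => rfl, by simp⟩

lemma IsCc.add {φ ψ : G → ℤ} (hφ : IsCc H φ) (hψ : IsCc H ψ) : IsCc H (φ + ψ) :=
  ⟨fun h hh g => by simp only [Pi.add_apply, hφ.1 h hh g, hψ.1 h hh g],
    (hφ.2.union hψ.2).subset
      (Function.support_add (φ ∘ Quotient.out (s := QuotientGroup.leftRel H)) _)⟩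

lemma IsCc.neg {φ : G → ℤ} (hφ : IsCc H φ) : IsCc H (-φ) :=
  ⟨fun h hh g => by simp only [Pi.neg_apply, hφ.1 h hh g], by simpa using hφ.2⟩

lemma isCc_cosetIndicator (y : G ⧸ H) : IsCc H (cosetIndicator H y) := by
  refine ⟨fun h hh g => ?_, (Set.finite_singleton y).subset fun z hz => ?_⟩
  · simp only [cosetIndicator]
    rw [QuotientGroup.mk_mul_of_mem g hh]
  · by_contra hzy
    simp [cosetIndicator, hzy] at hz

lemma cosetIndicator_eq_translate (y : G ⧸ H) :
    cosetIndicator H y = fun x => cosetIndicator H (1 : G) ((Quotient.out y)⁻¹ * x) := by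
  funext x
  have key : (x : G ⧸ H) = y ↔ (((Quotient.out y)⁻¹ * x : G) : G ⧸ H) = (1 : G) := by
    rw [QuotientGroup.eq, mul_one, inv_mem_iff, ← QuotientGroup.eq, QuotientGroup.out_eq',
      eq_comm]
  unfold cosetIndicator
  congr 1
  exact propext key

open Classical in
lemma cosetIndicator_out (y z : G ⧸ H) :
    cosetIndicator H y (Quotient.out z) = if z = y then 1 else 0 := by
  simp only [cosetIndicator, QuotientGroup.out_eq']

lemma cosetIndicator_one_mul {h : G} (hh : h ∈ H) (g : G) :
    cosetIndicator H (1 : G) (h * g) = cosetIndicator H (1 : G) g := by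
  have key : ((h * g : G) : G ⧸ H) = (1 : G) ↔ (g : G ⧸ H) = (1 : G) := by
    simp only [QuotientGroup.eq, mul_one, inv_mem_iff, mul_mem_cancel_left hh]
  unfold cosetIndicator
  congr 1
  exact propext key

lemma IsCc.eq_sum_smul_cosetIndicator {φ : G → ℤ} (hφ : IsCc H φ) :
    φ = ∑ y ∈ hφ.2.toFinset, φ (Quotient.out y) • cosetIndicator H y := by
  funext x
  simp only [Finset.sum_apply, Pi.smul_apply, smul_eq_mul, cosetIndicator, mul_ite, mul_one,
    mul_zero, Finset.sum_ite_eq, Set.Finite.mem_toFinset, Set.mem_ofPred_eq,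
    apply_out_mk hφ.1 x]
  split_ifs with hx <;> simp_all

lemma hconv_summand_congr {φ f : G → ℤ} (hφ : ∀ h ∈ H, ∀ g : G, φ (g * h) = φ g)
    (hf : ∀ h ∈ H, ∀ g : G, f (h * g) = f g) {a b : G} (hab : (a : G ⧸ H) = b) (x : G) :
    φ a * f (a⁻¹ * x) = φ b * f (b⁻¹ * x) := by
  obtain ⟨h, hh, rfl⟩ : ∃ h ∈ H, b = a * h := ⟨a⁻¹ * b, QuotientGroup.eq.mp hab, by group⟩
  rw [hφ h hh, mul_inv_rev, mul_assoc, hf _ (inv_mem hh)]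

lemma hconv_summand_support_subset (φ f : G → ℤ) (x : G) :
    (Function.support fun y : G ⧸ H => φ (Quotient.out y) * f ((Quotient.out y)⁻¹ * x)) ⊆
      {y | φ (Quotient.out y) ≠ 0} :=
  Function.support_mul_subset_left _ _

lemma hconv_add {φ φ' : G → ℤ} (f : G → ℤ) (hφ : IsCc H φ) (hφ' : IsCc H φ') :
    hconv H (φ + φ') f = hconv H φ f + hconv H φ' f := by
  funext x
  simp only [hconv, Pi.add_apply, add_mul]
  exact finsum_add_distrib (hφ.2.subset (hconv_summand_support_subset φ f x))
    (hφ'.2.subset (hconv_summand_support_subset φ' f x))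

lemma hconv_translate {φ f : G → ℤ} (hφ : ∀ h ∈ H, ∀ g : G, φ (g * h) = φ g)
    (hf : ∀ h ∈ H, ∀ g : G, f (h * g) = f g) (g : G) :
    hconv H (fun x => φ (g⁻¹ * x)) f = fun x => hconv H φ f (g⁻¹ * x) := by
  funext x
  simp only [hconv]
  rw [← finsum_comp_equiv (MulAction.toPerm g : Equiv.Perm (G ⧸ H))]
  refine finsum_congr fun z => ?_
  have hmk : ((g⁻¹ * Quotient.out (g • z) : G) : G ⧸ H) = z := by
    rw [← smul_eq_mul, MulAction.Quotient.mk_smul_out, inv_smul_smul]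
  calc _ = φ (g⁻¹ * Quotient.out (g • z)) *
        f ((g⁻¹ * Quotient.out (g • z))⁻¹ * (g⁻¹ * x)) := by simp [mul_assoc]
    _ = _ := hconv_summand_congr hφ hf (hmk.trans (QuotientGroup.out_eq' z).symm) _

lemma hconv_cosetIndicator_one {f : G → ℤ} (hf : ∀ h ∈ H, ∀ g : G, f (h * g) = f g) :
    hconv H (cosetIndicator H (1 : G)) f = f := by
  funext x
  rw [hconv, finsum_eq_single _ ((1 : G) : G ⧸ H) fun y hy => by simp [cosetIndicator_out, hy]]
  have hout : Quotient.out ((1 : G) : G ⧸ H) ∈ H := by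
    simpa using QuotientGroup.eq.mp (QuotientGroup.out_eq' ((1 : G) : G ⧸ H))
  simp [cosetIndicator_out, hf _ (inv_mem hout)]

lemma IsCc.hconv {φ f : G → ℤ} (hφ : IsCc H φ) (hf : IsCc H f) : IsCc H (hconv H φ f) := by
  refine ⟨fun h hh g => finsum_congr fun y => by rw [← mul_assoc, hf.1 h hh], ?_⟩
  refine (hφ.2.biUnion fun y _ => hf.2.image (Quotient.out y • ·)).subset fun z hz => ?_
  obtain ⟨y, hy⟩ : ∃ y : G ⧸ H,
      φ (Quotient.out y) * f ((Quotient.out y)⁻¹ * Quotient.out z) ≠ 0 := by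
    by_contra! h
    exact hz (finsum_eq_zero_of_forall_eq_zero h)
  refine Set.mem_biUnion (left_ne_zero_of_mul hy)
    ⟨((Quotient.out y)⁻¹ * Quotient.out z : G), ?_, ?_⟩
  · simpa [apply_out_mk hf.1] using right_ne_zero_of_mul hy
  · simp only [MulAction.Quotient.smul_mk, smul_eq_mul, mul_inv_cancel_left,
      QuotientGroup.out_eq']

lemma IsHeckeElt.isCc (hfin : ∀ g : G,
      (QuotientGroup.mk '' ((H : Set G) * {g} * (H : Set G)) : Set (G ⧸ H)).Finite)
    {f : G → ℤ} (hf : IsHeckeElt H f) : IsCc H f := by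
  refine ⟨hf.2.1, ?_⟩
  obtain ⟨C, hC⟩ := hf.2.2
  refine (C.finite_toSet.biUnion fun c _ => hfin c).subset fun y hy => ?_
  obtain ⟨c, hc, hm⟩ := hC _ hy
  exact Set.mem_biUnion hc ⟨_, hm, QuotientGroup.out_eq' y⟩

lemma IsCc.isHeckeElt {f : G → ℤ} (hf : IsCc H f) (hl : ∀ h ∈ H, ∀ g : G, f (h * g) = f g) :
    IsHeckeElt H f := by
  classical
  refine ⟨hl, hf.1, hf.2.toFinset.image Quotient.out, fun g hg =>
    ⟨Quotient.out (g : G ⧸ H), Finset.mem_image_of_mem _ ?_, ?_⟩⟩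
  · rw [Set.Finite.mem_toFinset]
    exact (apply_out_mk hf.1 g).trans_ne hg
  · obtain ⟨h, hh⟩ := QuotientGroup.mk_out_eq_mul H g
    rw [hh]
    exact Set.mem_mul.mpr ⟨1 * (g * h), Set.mul_mem_mul H.one_mem rfl, h⁻¹, inv_mem h.2, by group⟩

def ccAddSubgroup (H : Subgroup G) : AddSubgroup (G → ℤ) where
  carrier := {φ | IsCc H φ}
  add_mem' := IsCc.add
  zero_mem' := isCc_zero
  neg_mem' := IsCc.neg

/-- An element of `End_{ℤ[G]} C_c(G/H)`, given as a map on all of `G → ℤ` whose values off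
`C_c(G/H)` are irrelevant. -/
structure IsEquivariantCcHom (H : Subgroup G) (F : (G → ℤ) → (G → ℤ)) : Prop where
  map_add : ∀ φ φ' : G → ℤ, IsCc H φ → IsCc H φ' → F (φ + φ') = F φ + F φ'
  map_translate : ∀ g : G, ∀ φ : G → ℤ, IsCc H φ →
    F (fun x => φ (g⁻¹ * x)) = fun x => F φ (g⁻¹ * x)

namespace IsEquivariantCcHom

variable {F : (G → ℤ) → (G → ℤ)}

lemma map_sum_zsmul (hF : IsEquivariantCcHom H F) {ι : Type*} (s : Finset ι) (c : ι → ℤ)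
    {ψ : ι → G → ℤ} (hψ : ∀ i, IsCc H (ψ i)) :
    F (∑ i ∈ s, c i • ψ i) = ∑ i ∈ s, c i • F (ψ i) := by
  let F' : ccAddSubgroup H →+ (G → ℤ) :=
    AddMonoidHom.mk' (fun φ => F φ) fun φ ψ => hF.map_add φ ψ φ.2 ψ.2
  calc F (∑ i ∈ s, c i • ψ i) = F' (∑ i ∈ s, c i • ⟨ψ i, hψ i⟩) := by
        simp only [F', AddMonoidHom.mk'_apply, AddSubgroup.val_finsetSum, AddSubgroup.coe_zsmul]
    _ = ∑ i ∈ s, c i • F (ψ i) := by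
        simp only [map_sum, map_zsmul, F', AddMonoidHom.mk'_apply]

lemma map_cosetIndicator (hF : IsEquivariantCcHom H F) (y : G ⧸ H) :
    F (cosetIndicator H y) = fun x => F (cosetIndicator H (1 : G)) ((Quotient.out y)⁻¹ * x) := by
  rw [cosetIndicator_eq_translate, hF.map_translate _ _ (isCc_cosetIndicator _)]

lemma eq_of_apply_cosetIndicator_one {F' : (G → ℤ) → (G → ℤ)} (hF : IsEquivariantCcHom H F)
    (hF' : IsEquivariantCcHom H F')
    (h : F (cosetIndicator H (1 : G)) = F' (cosetIndicator H (1 : G))) {φ : G → ℤ}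
    (hφ : IsCc H φ) : F φ = F' φ := by
  rw [hφ.eq_sum_smul_cosetIndicator, hF.map_sum_zsmul _ _ isCc_cosetIndicator,
    hF'.map_sum_zsmul _ _ isCc_cosetIndicator]
  refine Finset.sum_congr rfl fun y _ => ?_
  rw [hF.map_cosetIndicator, hF'.map_cosetIndicator, h]

lemma left_invariant (hF : IsEquivariantCcHom H F) {φ : G → ℤ} (hφ : IsCc H φ)
    (hl : ∀ h ∈ H, ∀ g : G, φ (h * g) = φ g) : ∀ h ∈ H, ∀ g : G, F φ (h * g) = F φ g := by
  intro h hh g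
  have hφh : (fun x => φ (h⁻¹⁻¹ * x)) = φ := funext fun x => by rw [inv_inv, hl h hh]
  have := congrFun (hF.map_translate h⁻¹ φ hφ) g
  rwa [hφh, inv_inv, eq_comm] at this

lemma comp {F' : (G → ℤ) → (G → ℤ)} (hF : IsEquivariantCcHom H F)
    (hF' : IsEquivariantCcHom H F') (hmaps : ∀ φ, IsCc H φ → IsCc H (F φ)) :
    IsEquivariantCcHom H (F' ∘ F) where
  map_add φ φ' hφ hφ' := by
    simp only [Function.comp_apply, hF.map_add φ φ' hφ hφ',
      hF'.map_add _ _ (hmaps φ hφ) (hmaps φ' hφ')]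
  map_translate g φ hφ := by
    simp only [Function.comp_apply, hF.map_translate g φ hφ,
      hF'.map_translate g _ (hmaps φ hφ)]

end IsEquivariantCcHom

lemma isEquivariantCcHom_hconv {f : G → ℤ} (hf : ∀ h ∈ H, ∀ g : G, f (h * g) = f g) :
    IsEquivariantCcHom H (hconv H · f) :=
  ⟨fun _ _ hφ hφ' => hconv_add f hφ hφ', fun g _ hφ => hconv_translate hφ.1 hf g⟩

lemma IsHeckeElt.hconv (hfin : ∀ g : G,
      (QuotientGroup.mk '' ((H : Set G) * {g} * (H : Set G)) : Set (G ⧸ H)).Finite)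
    {f₁ f₂ : G → ℤ} (hf₁ : IsHeckeElt H f₁) (hf₂ : IsHeckeElt H f₂) :
    IsHeckeElt H (hconv H f₁ f₂) :=
  ((hf₁.isCc hfin).hconv (hf₂.isCc hfin)).isHeckeElt
    ((isEquivariantCcHom_hconv hf₂.1).left_invariant (hf₁.isCc hfin) hf₁.1)

end

/-- The map `h ↦ e_h := (φ ↦ φ ⋆ h)` is a bijection from `H(G,H)` onto the `ℤ`-linear
`G`-equivariant endomorphisms of `C_c(G/H)`, satisfying `e_{h₁ ⋆ h₂} = e_{h₂} ∘ e_{h₁}`;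
i.e. `H(G,H)` is isomorphic to the opposite ring of `End_{ℤ[G]} C_c(G/H)`. -/
theorem hecke_ring_eq_opposite_equivariant_endomorphisms {G : Type} [Group G]
    (H : Subgroup G)
    (hfin : ∀ g : G,
      (QuotientGroup.mk '' ((H : Set G) * {g} * (H : Set G)) : Set (G ⧸ H)).Finite) :
    -- `e_h` maps `C_c(G/H)` to itself
    (∀ f : G → ℤ, IsHeckeElt H f → ∀ φ : G → ℤ, IsCc H φ → IsCc H (hconv H φ f)) ∧
    -- `e_h` is additive (hence `ℤ`-linear)
    (∀ f : G → ℤ, IsHeckeElt H f → ∀ φ φ' : G → ℤ, IsCc H φ → IsCc H φ' →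
        hconv H (φ + φ') f = hconv H φ f + hconv H φ' f) ∧
    -- `e_h` commutes with the left translation action of `G`
    (∀ f : G → ℤ, IsHeckeElt H f → ∀ g : G, ∀ φ : G → ℤ, IsCc H φ →
        hconv H (fun x => φ (g⁻¹ * x)) f = fun x => hconv H φ f (g⁻¹ * x)) ∧
    -- `h ↦ e_h` is injective
    (∀ f f' : G → ℤ, IsHeckeElt H f → IsHeckeElt H f' →
        (∀ φ : G → ℤ, IsCc H φ → hconv H φ f = hconv H φ f') → f = f') ∧
    -- `h ↦ e_h` is surjective onto the `ℤ`-linear `G`-equivariant endomorphisms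
    (∀ E : (G → ℤ) → (G → ℤ),
        (∀ φ : G → ℤ, IsCc H φ → IsCc H (E φ)) →
        (∀ φ φ' : G → ℤ, IsCc H φ → IsCc H φ' → E (φ + φ') = E φ + E φ') →
        (∀ g : G, ∀ φ : G → ℤ, IsCc H φ →
          E (fun x => φ (g⁻¹ * x)) = fun x => E φ (g⁻¹ * x)) →
        ∃ f : G → ℤ, IsHeckeElt H f ∧ ∀ φ : G → ℤ, IsCc H φ → E φ = hconv H φ f) ∧
    -- `e_{h₁ ⋆ h₂} = e_{h₂} ∘ e_{h₁}` (the isomorphism reverses multiplication)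
    (∀ f₁ f₂ : G → ℤ, IsHeckeElt H f₁ → IsHeckeElt H f₂ → ∀ φ : G → ℤ, IsCc H φ →
        hconv H φ (hconv H f₁ f₂) = hconv H (hconv H φ f₁) f₂) := by
  have hone := isCc_cosetIndicator (H := H) (1 : G)
  refine ⟨fun f hf φ hφ => hφ.hconv (hf.isCc hfin),
    fun f hf => (isEquivariantCcHom_hconv hf.1).map_add,
    fun f hf => (isEquivariantCcHom_hconv hf.1).map_translate, ?_, ?_, ?_⟩
  · intro f f' hf hf' h
    simpa only [hconv_cosetIndicator_one hf.1, hconv_cosetIndicator_one hf'.1] using h _ hone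
  · intro E hCc hadd htranslate
    have hE : IsEquivariantCcHom H E := ⟨hadd, htranslate⟩
    have hf : IsHeckeElt H (E (cosetIndicator H (1 : G))) :=
      (hCc _ hone).isHeckeElt (hE.left_invariant hone fun _ hh => cosetIndicator_one_mul hh)
    exact ⟨_, hf, fun φ hφ => hE.eq_of_apply_cosetIndicator_one (isEquivariantCcHom_hconv hf.1)
      (hconv_cosetIndicator_one hf.1).symm hφ⟩
  · intro f₁ f₂ hf₁ hf₂ φ hφ
    have h₁₂ := hf₁.hconv hfin hf₂
    refine (isEquivariantCcHom_hconv h₁₂.1).eq_of_apply_cosetIndicator_one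
      ((isEquivariantCcHom_hconv hf₁.1).comp (isEquivariantCcHom_hconv hf₂.1)
        fun ψ hψ => hψ.hconv (hf₁.isCc hfin)) ?_ hφ
    simp only [Function.comp_apply, hconv_cosetIndicator_one h₁₂.1, hconv_cosetIndicator_one hf₁.1]
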